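/- Let M₁ be a randomized mechanism from datasets to probability distributions over outcomes Ω₁ satisfying (ε₁, δ₁)-DP with respect to an adjacency relation on datasets, and let M₂ : Ω₁ → (datasets → PMF Ω₂) be a family of mechanisms such that for every fixed ω₁ ∈ Ω₁, the mechanism D ↦ M₂(ω₁)(D) satisfies (ε₂, δ₂)-DP with respect to the same adjacency relation. Then the adaptively composed mechanism that on dataset D samples ω₁ ~ M₁(D), then samples ω₂ ~ M₂(ω₁)(D), and returns (ω₁, ω₂), satisfies (ε₁ + ε₂, δ₁ + δ₂)-DP with respect to that adjacency relation. -/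

import Mathlib

/-- A randomized mechanism `M` from datasets to probability mass functions over an
outcome type `Ω` satisfies `(ε, δ)`-differential privacy with respect to an adjacency
relation `adj` on datasets if for all pairs of adjacent datasets `D, D'` and all
events `E ⊆ Ω`, `Pr[M(D) ∈ E] ≤ e^ε · Pr[M(D') ∈ E] + δ`. -/
def IsDP {Dset Ω : Type*} (adj : Dset → Dset → Prop) (M : Dset → PMF Ω)
    (ε δ : ℝ) : Prop :=
  ∀ ⦃D D' : Dset⦄, adj D D' → ∀ E : Set Ω,
    (M D).toOuterMeasure E ≤
      ENNReal.ofReal (Real.exp ε) * (M D').toOuterMeasure E + ENNReal.ofReal δ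

/-!
By the layer-cake formula, an `(ε, δ)` bound on the probabilities of events extends to the
expectations of test functions with values in `[0, 1]`. Given the first outcome `ω₁`, the second
stage bounds the conditional probability `f ω₁` of the event by `e^ε₂ f' ω₁ + δ₂`. The cap
`min f (e^ε₂ f')` is a test function that differs from `f` by at most `δ₂`, and the first-stage
bound applied to it gives the composed bound.
-/

open MeasureTheory Set
open scoped ENNReal

namespace MeasureTheory

variable {α : Type*} [MeasurableSpace α]

theorem lintegral_eq_setLIntegral_Ioc_meas_lt (μ : Measure α) {g : α → ℝ≥0∞}
    (hg : Measurable g) (hg1 : ∀ a, g a ≤ 1) :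
    ∫⁻ a, g a ∂μ = ∫⁻ t in Ioc (0 : ℝ) 1, μ {a | ENNReal.ofReal t < g a} := by
  have hg_ne_top : ∀ a, g a ≠ ∞ := fun a => ((hg1 a).trans_lt ENNReal.one_lt_top).ne
  have hlevel : ∀ t : ℝ, 0 ≤ t → {a | ENNReal.ofReal t < g a} = {a | t < (g a).toReal} :=
    fun t ht => by ext a; exact ENNReal.ofReal_lt_iff_lt_toReal ht (hg_ne_top a)
  have hempty : ∀ t ∈ Ioi (1 : ℝ), μ {a | t < (g a).toReal} = 0 := fun t ht => by
    have : {a | t < (g a).toReal} = ∅ := eq_empty_of_forall_notMem fun a ha =>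
      lt_asymm ha ((ENNReal.toReal_le_of_le_ofReal zero_le_one (by simpa using hg1 a)).trans_lt ht)
    rw [this, measure_empty]
  calc ∫⁻ a, g a ∂μ = ∫⁻ a, ENNReal.ofReal (g a).toReal ∂μ :=
        lintegral_congr fun a => (ENNReal.ofReal_toReal (hg_ne_top a)).symm
    _ = ∫⁻ t in Ioi 0, μ {a | t < (g a).toReal} :=
        lintegral_eq_lintegral_meas_lt μ (.of_forall fun a => ENNReal.toReal_nonneg)
          hg.ennreal_toReal.aemeasurable
    _ = ∫⁻ t in Ioc 0 1, μ {a | t < (g a).toReal} := by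
        rw [← Ioc_union_Ioi_eq_Ioi zero_le_one, lintegral_union measurableSet_Ioi
          Ioc_disjoint_Ioi_same, setLIntegral_congr_fun measurableSet_Ioi hempty,
          lintegral_zero, add_zero]
    _ = ∫⁻ t in Ioc (0 : ℝ) 1, μ {a | ENNReal.ofReal t < g a} :=
        setLIntegral_congr_fun measurableSet_Ioc fun t ht => by rw [hlevel t ht.1.le]

theorem lintegral_le_mul_lintegral_add_of_forall_measure_le {μ ν : Measure α} {c d : ℝ≥0∞}
    (hμν : ∀ s, MeasurableSet s → μ s ≤ c * ν s + d) {g : α → ℝ≥0∞} (hg : Measurable g)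
    (hg1 : ∀ a, g a ≤ 1) :
    ∫⁻ a, g a ∂μ ≤ c * ∫⁻ a, g a ∂ν + d := by
  have hlevel : ∀ t : ℝ, MeasurableSet {a | ENNReal.ofReal t < g a} := fun t =>
    measurableSet_lt measurable_const hg
  have hν_level : Measurable fun t : ℝ => ν {a | ENNReal.ofReal t < g a} :=
    Antitone.measurable fun t t' htt' => measure_mono fun a ha =>
      (ENNReal.ofReal_le_ofReal htt').trans_lt ha
  rw [lintegral_eq_setLIntegral_Ioc_meas_lt μ hg hg1,
    lintegral_eq_setLIntegral_Ioc_meas_lt ν hg hg1]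
  calc ∫⁻ t in Ioc (0 : ℝ) 1, μ {a | ENNReal.ofReal t < g a}
      ≤ ∫⁻ t in Ioc (0 : ℝ) 1, (c * ν {a | ENNReal.ofReal t < g a} + d) :=
        lintegral_mono fun t => hμν _ (hlevel t)
    _ = c * (∫⁻ t in Ioc (0 : ℝ) 1, ν {a | ENNReal.ofReal t < g a}) + d := by
        rw [lintegral_add_right _ measurable_const, lintegral_const_mul _ hν_level,
          setLIntegral_const, Real.volume_Ioc, sub_zero, ENNReal.ofReal_one, mul_one]

end MeasureTheory

namespace PMF

variable {α : Type*}

theorem lintegral_eq_tsum [MeasurableSpace α] [MeasurableSingletonClass α] (p : PMF α)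
    (g : α → ℝ≥0∞) : ∫⁻ a, g a ∂p.toMeasure = ∑' a, p a * g a := by
  have hsupport : Function.support (fun a => p a * g a) ⊆ p.support := fun a ha =>
    left_ne_zero_of_mul ha
  rw [← p.restrict_toMeasure_support, lintegral_countable _ p.support_countable,
    ← tsum_subtype_eq_of_support_subset hsupport]
  exact tsum_congr fun a => by
    rw [p.toMeasure_apply_singleton _ (measurableSet_singleton _), mul_comm]

theorem toOuterMeasure_apply_le_one (p : PMF α) (s : Set α) : p.toOuterMeasure s ≤ 1 :=
  (p.toOuterMeasure.mono (subset_univ s)).trans_eq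
    ((p.toOuterMeasure_apply_eq_one_iff univ).2 (subset_univ _))

theorem tsum_mul_le_of_forall_toOuterMeasure_le {p p' : PMF α} {c d : ℝ≥0∞}
    (h : ∀ s, p.toOuterMeasure s ≤ c * p'.toOuterMeasure s + d) {g : α → ℝ≥0∞}
    (hg1 : ∀ a, g a ≤ 1) :
    ∑' a, p a * g a ≤ c * ∑' a, p' a * g a + d := by
  let _ : MeasurableSpace α := ⊤
  have : MeasurableSingletonClass α := ⟨fun _ => trivial⟩
  rw [← lintegral_eq_tsum, ← lintegral_eq_tsum]
  refine lintegral_le_mul_lintegral_add_of_forall_measure_le (fun s hs => ?_)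
    measurable_from_top hg1
  simpa only [toMeasure_apply_eq_toOuterMeasure_apply _ hs] using h s

theorem tsum_mul_le_of_forall_toOuterMeasure_le_of_forall_le {p p' : PMF α}
    {c₁ d₁ c₂ d₂ : ℝ≥0∞} (hp : ∀ s, p.toOuterMeasure s ≤ c₁ * p'.toOuterMeasure s + d₁)
    {f f' : α → ℝ≥0∞} (hf1 : ∀ a, f a ≤ 1) (hf : ∀ a, f a ≤ c₂ * f' a + d₂) :
    ∑' a, p a * f a ≤ c₁ * c₂ * ∑' a, p' a * f' a + (d₁ + d₂) := by
  set g : α → ℝ≥0∞ := fun a => min (f a) (c₂ * f' a)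
  have hfg : ∀ a, f a ≤ g a + d₂ := fun a => by
    rw [← min_add_add_right]; exact le_min le_self_add (hf a)
  calc ∑' a, p a * f a
      ≤ ∑' a, p a * (g a + d₂) := ENNReal.tsum_le_tsum fun a => mul_le_mul_right (hfg a) _
    _ = ∑' a, p a * g a + d₂ := by
        simp only [mul_add]
        rw [ENNReal.tsum_add, ENNReal.tsum_mul_right, p.tsum_coe, one_mul]
    _ ≤ c₁ * ∑' a, p' a * g a + d₁ + d₂ := by
        gcongr
        exact tsum_mul_le_of_forall_toOuterMeasure_le hp fun a => (min_le_left _ _).trans (hf1 a)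
    _ ≤ c₁ * ∑' a, p' a * (c₂ * f' a) + d₁ + d₂ := by
        gcongr with a
        exact min_le_right _ _
    _ = c₁ * c₂ * ∑' a, p' a * f' a + (d₁ + d₂) := by
        simp only [mul_left_comm (p' _), ENNReal.tsum_mul_left, mul_assoc, add_assoc]

end PMF

theorem adaptive_composition_general {Dset Ω₁ Ω₂ : Type*} (adj : Dset → Dset → Prop)
    (M₁ : Dset → PMF Ω₁) (M₂ : Ω₁ → Dset → PMF Ω₂)
    (ε₁ ε₂ δ₁ δ₂ : ℝ) (hδ₁ : 0 ≤ δ₁) (hδ₂ : 0 ≤ δ₂)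
    (h₁ : IsDP adj M₁ ε₁ δ₁) (h₂ : ∀ ω₁ : Ω₁, IsDP adj (fun D => M₂ ω₁ D) ε₂ δ₂) :
    IsDP adj
      (fun D => (M₁ D).bind fun ω₁ => (M₂ ω₁ D).map fun ω₂ => (ω₁, ω₂))
      (ε₁ + ε₂) (δ₁ + δ₂) := by
  intro D D' hadj E
  simp only [PMF.toOuterMeasure_bind_apply, PMF.toOuterMeasure_map_apply]
  rw [Real.exp_add, ENNReal.ofReal_mul (Real.exp_nonneg _), ENNReal.ofReal_add hδ₁ hδ₂]
  exact PMF.tsum_mul_le_of_forall_toOuterMeasure_le_of_forall_le (h₁ hadj)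
    (fun _ => PMF.toOuterMeasure_apply_le_one _ _) (fun ω₁ => h₂ ω₁ hadj _)

/-- Adaptive composition: if `M₁` is `(ε₁, δ₁)`-DP and, for every fixed first-phase
outcome `ω₁`, the mechanism `D ↦ M₂ ω₁ D` is `(ε₂, δ₂)`-DP, then the adaptively
composed mechanism that samples `ω₁ ~ M₁(D)`, then `ω₂ ~ M₂(ω₁)(D)`, and returns
`(ω₁, ω₂)` is `(ε₁ + ε₂, δ₁ + δ₂)`-DP. -/
theorem adaptive_composition {Dset Ω₁ Ω₂ : Type*} (adj : Dset → Dset → Prop)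
    (M₁ : Dset → PMF Ω₁) (M₂ : Ω₁ → Dset → PMF Ω₂)
    (ε₁ ε₂ δ₁ δ₂ : ℝ) (hε₁ : 0 ≤ ε₁) (hε₂ : 0 ≤ ε₂) (hδ₁ : 0 ≤ δ₁) (hδ₂ : 0 ≤ δ₂)
    (h₁ : IsDP adj M₁ ε₁ δ₁) (h₂ : ∀ ω₁ : Ω₁, IsDP adj (fun D => M₂ ω₁ D) ε₂ δ₂) :
    IsDP adj
      (fun D => (M₁ D).bind fun ω₁ => (M₂ ω₁ D).map fun ω₂ => (ω₁, ω₂))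
      (ε₁ + ε₂) (δ₁ + δ₂) :=
  adaptive_composition_general adj M₁ M₂ ε₁ ε₂ δ₁ δ₂ hδ₁ hδ₂ h₁ h₂
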